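/- arXiv:2605.17038 — 3 statements merged into one kernel-verified Lean document; each statement's English description precedes it below -/
import Mathlib

section
/- The isopignistic transformation preserves the pignistic probability: if m₂(F) = m₁(F) − ζ(F) + Σ_{G ∈ Par(F)} ζ(G)/|G| for all nonempty F ⊆ Ω, where ζ(F) = 0 whenever |F| ≤ 1 and Par(F) = {G ⊆ Ω : F ⊂ G, |G| = |F|+1}, then BetP_{m₁}(ω) = BetP_{m₂}(ω) for all ω ∈ Ω. -/
open Finset

theorem stmt_2 {Ω : Type*} [Fintype Ω] [DecidableEq Ω]
    (m₁ m₂ ζ : Finset Ω → ℝ)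
    (hζ : ∀ F : Finset Ω, F.card ≤ 1 → ζ F = 0)
    (hm₂ : ∀ F : Finset Ω, F ≠ ∅ →
      m₂ F = m₁ F - ζ F +
        ∑ G ∈ Finset.univ.filter (fun G : Finset Ω => F ⊂ G ∧ G.card = F.card + 1),
          ζ G / G.card)
    (hm₂e : m₂ ∅ = m₁ ∅) :
    ∀ ω : Ω,
      (∑ F ∈ Finset.univ.filter (fun F : Finset Ω => ω ∈ F), m₁ F / F.card) =
      (∑ F ∈ Finset.univ.filter (fun F : Finset Ω => ω ∈ F), m₂ F / F.card) := by
  intro ω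
  have inner : ∀ G : Finset Ω,
      ∑ F ∈ univ.filter (fun F : Finset Ω => ω ∈ F ∧ F ⊂ G ∧ G.card = F.card + 1),
        ζ G / G.card / F.card = if ω ∈ G then ζ G / G.card else 0 := by
    intro G
    by_cases hω : ω ∈ G
    · by_cases hc : G.card ≤ 1
      · have hz := hζ G hc
        simp [hz]
      · push_neg at hc
        have hfil : univ.filter (fun F : Finset Ω => ω ∈ F ∧ F ⊂ G ∧ G.card = F.card + 1)
            = (G.erase ω).image (fun x => G.erase x) := by
          ext F
          simp only [mem_filter, mem_univ, true_and, mem_image, mem_erase]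
          constructor
          · rintro ⟨hωF, hFG, hcard⟩
            have hsub := hFG.subset
            have hcd : (G \ F).card = 1 := by
              rw [card_sdiff_of_subset hsub]; omega
            obtain ⟨x, hx⟩ := Finset.card_eq_one.mp hcd
            have hxG : x ∈ G ∧ x ∉ F := by
              have : x ∈ G \ F := hx ▸ mem_singleton_self x
              simpa [mem_sdiff] using this
            refine ⟨x, ⟨fun h => hxG.2 (h ▸ hωF), hxG.1⟩, ?_⟩
            ext y
            simp only [mem_erase]
            constructor
            · rintro ⟨hyx, hyG⟩
              by_contra hyF
              have : y ∈ G \ F := mem_sdiff.mpr ⟨hyG, hyF⟩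
              rw [hx] at this
              exact hyx (mem_singleton.mp this)
            · intro hyF
              exact ⟨fun h => hxG.2 (h ▸ hyF), hsub hyF⟩
          · rintro ⟨x, ⟨hxω, hxG⟩, rfl⟩
            refine ⟨mem_erase.mpr ⟨fun h => hxω h.symm, hω⟩, erase_ssubset hxG, ?_⟩
            rw [card_erase_of_mem hxG]; omega
        have hinj : ∀ x ∈ G.erase ω, ∀ y ∈ G.erase ω,
            G.erase x = G.erase y → x = y := by
          intro x hx y hy hxy
          by_contra hne
          have hmem : x ∈ G.erase y := mem_erase.mpr ⟨hne, (mem_erase.mp hx).2⟩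
          rw [← hxy] at hmem
          exact (mem_erase.mp hmem).1 rfl
        rw [hfil, Finset.sum_image hinj]
        rw [Finset.sum_congr rfl
          (fun x hx => by rw [card_erase_of_mem (mem_erase.mp hx).2])]
        rw [Finset.sum_const, card_erase_of_mem hω, nsmul_eq_mul]
        have hne : ((G.card - 1 : ℕ) : ℝ) ≠ 0 := by
          have : 1 ≤ G.card - 1 := by omega
          positivity
        rw [if_pos hω, mul_comm, div_mul_cancel₀ _ hne]
    · have : univ.filter (fun F : Finset Ω => ω ∈ F ∧ F ⊂ G ∧ G.card = F.card + 1)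
          = ∅ := by
        ext F
        simp only [mem_filter, mem_univ, true_and, notMem_empty, iff_false]
        rintro ⟨hωF, hFG, _⟩
        exact hω (hFG.subset hωF)
      simp [this, hω]
  have key : ∑ F ∈ univ.filter (fun F : Finset Ω => ω ∈ F),
      (∑ G ∈ univ.filter (fun G : Finset Ω => F ⊂ G ∧ G.card = F.card + 1),
        ζ G / G.card) / F.card
      = ∑ F ∈ univ.filter (fun F : Finset Ω => ω ∈ F), ζ F / F.card := by
    simp only [Finset.sum_div]
    rw [Finset.sum_comm' (t' := (univ : Finset (Finset Ω)))
      (s' := fun G => univ.filter (fun F : Finset Ω => ω ∈ F ∧ F ⊂ G ∧ G.card = F.card + 1))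
      (by intro F G; simp only [mem_filter, mem_univ, true_and, and_true])]
    rw [Finset.sum_congr rfl (fun G _ => inner G)]
    rw [Finset.sum_ite, Finset.sum_const_zero, add_zero]
  have h1 : ∀ F ∈ univ.filter (fun F : Finset Ω => ω ∈ F),
      m₂ F / F.card = m₁ F / F.card - ζ F / F.card
        + (∑ G ∈ univ.filter (fun G : Finset Ω => F ⊂ G ∧ G.card = F.card + 1),
            ζ G / G.card) / F.card := by
    intro F hF
    have hne : F ≠ ∅ := by
      rintro rfl
      simpa using (mem_filter.mp hF).2
    rw [hm₂ F hne]; ring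
  rw [Finset.sum_congr rfl h1]
  rw [Finset.sum_add_distrib, Finset.sum_sub_distrib, key]
  ring
end

section
/- The possibility-to-probability reconstruction is the inverse of the probability-to-possibility transformation: given p with values sorted p₁ ≥ p₂ ≥ ... ≥ pₙ and π_r = Σ_j min(p_r, p_j), the recursion q_n = π_n/n, q_r = q_{r+1} + (π_r − π_{r+1})/r recovers q_r = p_r for all r. -/
/-! For antitone `p` the possibility weights are `π_r = r p_r + ∑_{j>r} p_j`, so `π_n = n p_n`
and `π_r - π_{r+1} = r (p_r - p_{r+1})`: the recursion for `q` is the telescoping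
reconstruction of `p` from its last value and its successive differences. -/

open Finset

section SumMin

variable {ι β : Type*} [Fintype ι] [LinearOrder ι] [LocallyFiniteOrderBot ι]
  [LocallyFiniteOrderTop ι]

theorem Antitone.sum_min_eq [AddCommMonoid β] [LinearOrder β] {p : ι → β} (hp : Antitone p)
    (i : ι) : ∑ j, min (p i) (p j) = #(Iic i) • p i + ∑ j ∈ Ioi i, p j := by
  rw [← sum_filter_add_sum_filter_not univ (· ≤ i)]
  simp only [not_le, filter_ge_eq_Iic, filter_lt_eq_Ioi]
  rw [sum_congr rfl fun j hj => min_eq_left (hp (mem_Iic.1 hj)),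
    sum_congr rfl fun j hj => min_eq_right (hp (mem_Ioi.1 hj).le), sum_const]

theorem Antitone.sum_min_sub_sum_min_of_covBy [Ring β] [LinearOrder β] {p : ι → β}
    (hp : Antitone p) {a b : ι} (hab : a ⋖ b) :
    ∑ j, min (p a) (p j) - ∑ j, min (p b) (p j) = #(Iic a) • (p a - p b) := by
  have hIoi : Ioi a = (Ioi b).cons b notMem_Ioi_self := by
    rw [← Ici_eq_cons_Ioi, ← coe_inj, coe_Ioi, coe_Ici, hab.Ioi_eq]
  have hIio : Iio b = Iic a := by rw [← coe_inj, coe_Iio, coe_Iic, hab.Iio_eq]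
  have hcard : #(Iic b) = #(Iic a) + 1 := by rw [Iic_eq_cons_Iio, card_cons, hIio]
  rw [hp.sum_min_eq, hp.sum_min_eq, hIoi, hcard, sum_cons, succ_nsmul, smul_sub]
  abel

end SumMin

theorem stmt_7 (n : ℕ) (hn : 0 < n)
    (p : Fin n → ℝ) (hmono : Antitone p)
    (π : Fin n → ℝ) (hπ : ∀ r, π r = ∑ j, min (p r) (p j))
    (q : Fin n → ℝ)
    (hqlast : q ⟨n - 1, by omega⟩ = π ⟨n - 1, by omega⟩ / n)
    (hqrec : ∀ r : ℕ, (hr : r + 1 < n) →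
      q ⟨r, by omega⟩ = q ⟨r + 1, hr⟩ +
        (π ⟨r, by omega⟩ - π ⟨r + 1, hr⟩) / (r + 1)) :
    ∀ r, q r = p r := by
  obtain ⟨m, rfl⟩ := Nat.exists_eq_add_one_of_ne_zero hn.ne'
  obtain rfl : π = fun r => ∑ j, min (p r) (p j) := funext hπ
  refine Fin.reverseInduction ?_ fun i ih => ?_
  · have hq : q (Fin.last m) = (∑ j, min (p (Fin.last m)) (p j)) / ((m + 1 : ℕ) : ℝ) :=
      hqlast
    have hIoi : Ioi (Fin.last m) = ∅ := Ioi_eq_empty.2 fun j _ => Fin.le_last j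
    rw [hq, hmono.sum_min_eq, hIoi, sum_empty, add_zero, Fin.card_Iic, Fin.val_last,
      nsmul_eq_mul, mul_div_cancel_left₀ _ (by positivity)]
  · have hq : q i.castSucc = q i.succ +
        (∑ j, min (p i.castSucc) (p j) - ∑ j, min (p i.succ) (p j)) / (i + 1) :=
      hqrec i i.succ.isLt
    rw [hq, ih, hmono.sum_min_sub_sum_min_of_covBy (Fin.covBy_iff.2 (Order.covBy_succ _)),
      Fin.card_Iic, Fin.val_castSucc, nsmul_eq_mul, Nat.cast_add_one,
      mul_div_cancel_left₀ _ (by positivity), add_sub_cancel]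
end

section
/- If all input mass functions are Bayesian (all focal sets are singletons), then under the proposed layer-wise fusion the fused mass function is also Bayesian: the higher-order commitment layers of each source are identically zero, so fusion by any t-norm or t-conorm with the zero profiles keeps all commitment layers zero (for t-norms, T(0,0) = 0; for t-conorms, S(0,0) = 0), and hence reconstruction assigns zero mass to every subset of cardinality ≥ 2. -/
open Finset

theorem stmt_14 {Ω : Type*} [Fintype Ω] [DecidableEq Ω]
    (m₁ m₂ : Finset Ω → ℝ)
    -- Bayesian mass functions: all focal sets are singletons
    (hb₁ : ∀ F : Finset Ω, F.card ≠ 1 → m₁ F = 0)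
    (hb₂ : ∀ F : Finset Ω, F.card ≠ 1 → m₂ F = 0)
    (T S : ℝ → ℝ → ℝ)
    -- t-norm: monotone, neutral element 1, range bounds on [0,1]²
    (hTmono : ∀ x₁ x₂ y₁ y₂, x₁ ≤ x₂ → y₁ ≤ y₂ → T x₁ y₁ ≤ T x₂ y₂)
    (hTone : ∀ x ∈ Set.Icc (0 : ℝ) 1, T x 1 = x)
    (hTrange : ∀ x ∈ Set.Icc (0 : ℝ) 1, ∀ y ∈ Set.Icc (0 : ℝ) 1,
      T x y ∈ Set.Icc (0 : ℝ) 1)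
    -- t-conorm: monotone, neutral element 0, range bounds on [0,1]²
    (hSmono : ∀ x₁ x₂ y₁ y₂, x₁ ≤ x₂ → y₁ ≤ y₂ → S x₁ y₁ ≤ S x₂ y₂)
    (hSzero : ∀ x ∈ Set.Icc (0 : ℝ) 1, S x 0 = x)
    (hSrange : ∀ x ∈ Set.Icc (0 : ℝ) 1, ∀ y ∈ Set.Icc (0 : ℝ) 1,
      S x y ∈ Set.Icc (0 : ℝ) 1) :
    -- the commitment layers of each Bayesian source vanish
    (∀ F : Finset Ω, 2 ≤ F.card →
      (∑ A ∈ Finset.univ.filter (fun A : Finset Ω => F ⊆ A),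
          m₁ A / (Nat.choose A.card F.card)) = 0 ∧
      (∑ A ∈ Finset.univ.filter (fun A : Finset Ω => F ⊆ A),
          m₂ A / (Nat.choose A.card F.card)) = 0) ∧
    -- fusing zero profiles keeps them zero
    T 0 0 = 0 ∧ S 0 0 = 0 ∧
    (∀ F : Finset Ω, 2 ≤ F.card →
      T (∑ A ∈ Finset.univ.filter (fun A : Finset Ω => F ⊆ A),
          m₁ A / (Nat.choose A.card F.card))
        (∑ A ∈ Finset.univ.filter (fun A : Finset Ω => F ⊆ A),
          m₂ A / (Nat.choose A.card F.card)) = 0 ∧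
      S (∑ A ∈ Finset.univ.filter (fun A : Finset Ω => F ⊆ A),
          m₁ A / (Nat.choose A.card F.card))
        (∑ A ∈ Finset.univ.filter (fun A : Finset Ω => F ⊆ A),
          m₂ A / (Nat.choose A.card F.card)) = 0) := by
  have hzero : ∀ (m : Finset Ω → ℝ), (∀ F : Finset Ω, F.card ≠ 1 → m F = 0) →
      ∀ F : Finset Ω, 2 ≤ F.card →
      (∑ A ∈ Finset.univ.filter (fun A : Finset Ω => F ⊆ A),
          m A / (Nat.choose A.card F.card)) = 0 := by
    intro m hb F hF
    apply Finset.sum_eq_zero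
    intro A hA
    simp only [Finset.mem_filter] at hA
    have : A.card ≠ 1 := by
      have := Finset.card_le_card hA.2
      omega
    rw [hb A this, zero_div]
  have hT0 : T 0 0 = 0 := by
    have h1 : T 0 0 ≤ T 0 1 := hTmono 0 0 0 1 le_rfl zero_le_one
    rw [hTone 0 (by norm_num)] at h1
    have h2 := (hTrange 0 (by norm_num) 0 (by norm_num)).1
    linarith
  have hS0 : S 0 0 = 0 := hSzero 0 (by norm_num)
  refine ⟨fun F hF => ⟨hzero m₁ hb₁ F hF, hzero m₂ hb₂ F hF⟩, hT0, hS0, fun F hF => ?_⟩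
  rw [hzero m₁ hb₁ F hF, hzero m₂ hb₂ F hF]
  exact ⟨hT0, hS0⟩
end
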